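/- arXiv:1909.09693 — 3 statements merged into one kernel-verified Lean document; each statement's English description precedes it below -/
import Mathlib

section
/- Suppose V : ℝ≥0 → ℝ is differentiable along a trajectory and satisfies: whenever γ(c) < V(t) we have V'(t) < 0, where γ is class-κ and c ≥ 0 is fixed. Then V(t) ≤ max{V(0), γ(c)} for all t ≥ 0. -/
open Set

/-- Fencing against the constants `M + ε`: on the boundary `f x = M + ε` we have `M < f x`, so the
derivative is negative there, strictly below the zero derivative of the fence. -/
theorem image_le_of_deriv_right_neg_of_lt {f f' : ℝ → ℝ} {a b M : ℝ}
    (hf : ContinuousOn f (Icc a b)) (hf' : ∀ x ∈ Ico a b, HasDerivWithinAt f (f' x) (Ici x) x)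
    (ha : f a ≤ M) (hneg : ∀ x ∈ Ico a b, M < f x → f' x < 0) :
    ∀ ⦃x⦄, x ∈ Icc a b → f x ≤ M := by
  intro x hx
  refine le_of_forall_pos_le_add fun ε hε => ?_
  refine image_le_of_deriv_right_lt_deriv_boundary hf hf' (B := fun _ => M + ε) (B' := fun _ => 0)
    (by linarith) (fun _ => hasDerivAt_const _ _) (fun y hy hfy => hneg y hy ?_) hx
  linarith

theorem stmt_1_general (γ : ℝ → ℝ) (c : ℝ) (V : ℝ → ℝ) (hV : Differentiable ℝ V)
    (hdec : ∀ t, 0 ≤ t → γ c < V t → deriv V t < 0) :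
    ∀ t, 0 ≤ t → V t ≤ max (V 0) (γ c) := fun t ht =>
  image_le_of_deriv_right_neg_of_lt hV.continuous.continuousOn
    (fun x _ => (hV x).hasDerivAt.hasDerivWithinAt) (le_max_left _ _)
    (fun x hx hlt => hdec x hx.1 ((le_max_right _ _).trans_lt hlt)) ⟨ht, le_rfl⟩

/-- comparison lemma. If `V` is differentiable and its derivative is
negative whenever `γ c < V t` (γ class-κ, `c ≥ 0`), then `V t ≤ max (V 0) (γ c)`
for all `t ≥ 0`. -/
theorem stmt_1 (γ : ℝ → ℝ) (hγc : Continuous γ) (hγm : StrictMono γ) (hγ0 : γ 0 = 0)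
    (c : ℝ) (hc : 0 ≤ c) (V : ℝ → ℝ) (hV : Differentiable ℝ V)
    (hdec : ∀ t, 0 ≤ t → γ c < V t → deriv V t < 0) :
    ∀ t, 0 ≤ t → V t ≤ max (V 0) (γ c) :=
  stmt_1_general γ c V hV hdec
end

section
/- If A₁ + B₁K is Hurwitz (all eigenvalues have negative real part), then there exist a symmetric positive definite matrix M and λ > 0 such that M ≥ C₁ᵀC₁ and (A₁+B₁K)ᵀM + M(A₁+B₁K) ≤ −2λM (in the Loewner order). -/
/-!
For small `h > 0` the eigenvalues `1 + h μ` of `B = 1 + h A` lie in the open unit disc, since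
`|1 + h μ|² = 1 + 2h Re μ + h² |μ|²` and `Re μ < 0`. By Gelfand's formula the powers of `B` are
then summable, so `P = ∑ₖ (Bᵏ)ᵀ Bᵏ` exists, satisfies the Stein equation `Bᵀ P B = P - 1` and
`P ≥ 1`. Expanding `B = 1 + h A` turns the Stein equation into
`AᵀP + PA = -h⁻¹ - h AᵀPA ≤ -h⁻¹`, and since `P` is bounded above, a multiple of `P` large enough
to dominate `C₁ᵀC₁` works with a small decay rate `λ`.
-/

open Matrix Filter Topology
open scoped ENNReal Pointwise ComplexOrder MatrixOrder

theorem Complex.eventually_norm_one_add_mul_lt_one {μ : ℂ} (hμ : μ.re < 0) :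
    ∀ᶠ h : ℝ in 𝓝[>] 0, ‖1 + h * μ‖ < 1 := by
  have hμ0 : 0 < normSq μ := normSq_pos.mpr (by rintro rfl; simp at hμ)
  filter_upwards [self_mem_nhdsWithin,
    nhdsWithin_le_nhds (eventually_lt_nhds (div_pos (neg_pos.mpr hμ) hμ0))]
    with h (hpos : 0 < h) hlt
  rw [lt_div_iff₀ hμ0, normSq_apply] at hlt
  have hsq : ‖1 + h * μ‖ ^ 2 < 1 := by
    rw [Complex.sq_norm, normSq_apply]
    simp only [add_re, add_im, one_re, one_im, mul_re, mul_im, ofReal_re, ofReal_im, zero_mul,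
      sub_zero, zero_add, add_zero]
    nlinarith [mul_lt_mul_of_pos_left hlt hpos, mul_neg_of_pos_of_neg hpos hμ]
  nlinarith [norm_nonneg (1 + h * μ)]

namespace spectrum

theorem spectralRadius_lt_of_forall_lt_of_finite {𝕜 A : Type*} [NormedField 𝕜] [Ring A]
    [Algebra 𝕜 A] {a : A} (hfin : (spectrum 𝕜 a).Finite) {r : ℝ≥0∞} (hr : 0 < r)
    (h : ∀ μ ∈ spectrum 𝕜 a, ‖μ‖₊ < r) : spectralRadius 𝕜 a < r := by
  rw [spectralRadius, ← hfin.coe_toFinset, Finset.iSup_coe, ← Finset.sup_eq_iSup,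
    Finset.sup_lt_iff hr]
  simpa using h

theorem exists_spectralRadius_one_add_smul_lt_one {A : Type*} [Ring A] [Algebra ℂ A] {a : A}
    (hfin : (spectrum ℂ a).Finite) (hre : ∀ μ ∈ spectrum ℂ a, μ.re < 0) :
    ∃ h : ℝ, 0 < h ∧ spectralRadius ℂ (1 + (h : ℂ) • a) < 1 := by
  have hall : ∀ᶠ h : ℝ in 𝓝[>] 0, ∀ μ ∈ spectrum ℂ a, ‖1 + h * μ‖ < 1 :=
    hfin.eventually_all.mpr fun μ hμ ↦ Complex.eventually_norm_one_add_mul_lt_one (hre μ hμ)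
  obtain ⟨h, hnorm, hpos⟩ := (hall.and self_mem_nhdsWithin).exists
  refine ⟨h, hpos, ?_⟩
  have hspec : spectrum ℂ (1 + (h : ℂ) • a) = {1} + (h : ℂ) • spectrum ℂ a := by
    rw [← map_one (algebraMap ℂ A), ← singleton_add_eq,
      ← Units.val_mk0 (Complex.ofReal_ne_zero.mpr hpos.ne'), ← Units.smul_def,
      unit_smul_eq_smul]
    rfl
  refine spectralRadius_lt_of_forall_lt_of_finite ?_ one_pos ?_ <;> rw [hspec]
  · exact (Set.finite_singleton 1).add hfin.smul_set
  · rintro _ ⟨_, rfl, _, ⟨μ, hμ, rfl⟩, rfl⟩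
    rw [ENNReal.coe_lt_one_iff, ← NNReal.coe_lt_coe]
    simpa using hnorm μ hμ

theorem summable_norm_pow_of_spectralRadius_lt_one {A : Type*} [NormedRing A] [NormedAlgebra ℂ A]
    [CompleteSpace A] {a : A} (ha : spectralRadius ℂ a < 1) : Summable fun k ↦ ‖a ^ k‖ := by
  obtain ⟨r, hρr, hr⟩ := ENNReal.lt_iff_exists_nnreal_btwn.mp ha
  have hr1 : (r : ℝ) < 1 := by exact_mod_cast hr
  have hroot : ∀ᶠ k : ℕ in atTop, ‖a ^ k‖ ^ (1 / k : ℝ) < r := by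
    filter_upwards [(pow_norm_pow_one_div_tendsto_nhds_spectralRadius a).eventually
      (gt_mem_nhds hρr)] with k hk
    exact (ENNReal.ofReal_lt_iff_lt_toReal (by positivity) ENNReal.coe_ne_top).mp hk
  refine Summable.of_norm_bounded_eventually (summable_geometric_of_lt_one r.coe_nonneg hr1) ?_
  rw [Nat.cofinite_eq_atTop]
  filter_upwards [hroot, eventually_gt_atTop 0] with k hk hk0
  rw [one_div, Real.rpow_inv_lt_iff_of_pos (z := (k : ℝ)) (norm_nonneg _) r.coe_nonneg
    (by positivity), Real.rpow_natCast] at hk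
  simpa using hk.le

end spectrum

namespace Matrix

section PosSemidef

variable {ι 𝕜 : Type*} [Fintype ι] [RCLike 𝕜]

theorem isClosed_setOf_posSemidef : IsClosed {M : Matrix ι ι 𝕜 | M.PosSemidef} := by
  simp only [posSemidef_iff_dotProduct_mulVec, Set.ofPred_and, Set.ofPred_forall]
  refine (isClosed_eq continuous_id.matrix_conjTranspose continuous_id).inter
    (isClosed_iInter fun x ↦ isClosed_le continuous_const ?_)
  fun_prop

theorem PosSemidef.tsum {β : Type*} {f : β → Matrix ι ι 𝕜} (hf : ∀ k, (f k).PosSemidef) :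
    (∑' k, f k).PosSemidef := by
  by_cases hs : Summable f
  · exact isClosed_setOf_posSemidef.mem_of_tendsto hs.hasSum
      (Eventually.of_forall fun s ↦ posSemidef_sum s fun k _ ↦ hf k)
  · simpa [tsum_eq_zero_of_not_summable hs] using PosSemidef.zero

end PosSemidef

variable {ι : Type*} [Fintype ι] [DecidableEq ι]

theorem IsHermitian.exists_le_smul_one {N : Matrix ι ι ℝ} (hN : N.IsHermitian) :
    ∃ r : ℝ, 0 ≤ r ∧ (r • 1 - N).PosSemidef := by
  obtain ⟨r, hr⟩ := N.finite_spectrum.bddAbove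
  refine ⟨max r 0, le_max_right r 0, ?_⟩
  rw [← Algebra.algebraMap_eq_smul_one, ← le_iff]
  exact le_algebraMap_of_spectrum_le (fun x hx ↦ (hr hx).trans (le_max_left r 0)) hN

section Frobenius

-- Transposition and the entrywise embedding `ℝ → ℂ` are isometries for the Frobenius norm.
open scoped Matrix.Norms.Frobenius

theorem summable_transpose_pow_mul_pow {B : Matrix ι ι ℝ} (hB : Summable fun k ↦ ‖B ^ k‖) :
    Summable fun k ↦ (B ^ k)ᵀ * B ^ k := by
  refine Summable.of_norm_bounded_eventually hB ?_
  rw [Nat.cofinite_eq_atTop]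
  filter_upwards [hB.tendsto_atTop_zero.eventually (ge_mem_nhds one_pos)] with k hk
  calc ‖(B ^ k)ᵀ * B ^ k‖ ≤ ‖B ^ k‖ * ‖B ^ k‖ :=
        (frobenius_norm_mul (B ^ k)ᵀ (B ^ k)).trans_eq (by rw [frobenius_norm_transpose])
    _ ≤ ‖B ^ k‖ := mul_le_of_le_one_left (norm_nonneg _) hk

theorem exists_stein_solution {B : Matrix ι ι ℝ} (hB : Summable fun k ↦ ‖B ^ k‖) :
    ∃ P : Matrix ι ι ℝ, (P - 1).PosSemidef ∧ Bᵀ * P * B = P - 1 := by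
  have hs := summable_transpose_pow_mul_pow hB
  have htail : ∑' k, (B ^ (k + 1))ᵀ * B ^ (k + 1) = (∑' k, (B ^ k)ᵀ * B ^ k) - 1 := by
    rw [hs.tsum_eq_zero_add]
    simp
  refine ⟨∑' k, (B ^ k)ᵀ * B ^ k, ?_, ?_⟩
  · rw [← htail]
    exact PosSemidef.tsum fun k ↦ by
      simpa [conjTranspose_eq_transpose_of_trivial] using
        posSemidef_conjTranspose_mul_self (B ^ (k + 1))
  · rw [← htail, ← hs.tsum_mul_left, ← (hs.mul_left _).tsum_mul_right]
    congr 1 with k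
    simp [pow_succ, Matrix.mul_assoc]

theorem exists_lyapunov_of_summable_norm_pow_one_add_smul {A : Matrix ι ι ℝ} {h : ℝ} (hh : 0 < h)
    (hB : Summable fun k ↦ ‖(1 + h • A) ^ k‖) :
    ∃ P : Matrix ι ι ℝ, (P - 1).PosSemidef ∧ (-(Aᵀ * P + P * A) - h⁻¹ • 1).PosSemidef := by
  obtain ⟨P, hP, hstein⟩ := exists_stein_solution hB
  refine ⟨P, hP, ?_⟩
  have hAPA : (Aᵀ * P * A).PosSemidef := by
    simpa [conjTranspose_eq_transpose_of_trivial] using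
      (hP.add PosSemidef.one).conjTranspose_mul_mul_same A
  convert hAPA.smul hh.le using 1
  apply smul_right_injective _ hh.ne'
  simp only [transpose_add, transpose_one, transpose_smul, add_mul, mul_add, one_mul, mul_one,
    smul_mul_assoc, mul_smul_comm] at hstein
  simp only [smul_sub, smul_neg, smul_add, smul_smul, mul_inv_cancel₀ hh.ne', one_smul]
  linear_combination (norm := module) (-1 : ℝ) • hstein

theorem exists_lyapunov_of_hurwitz {A : Matrix ι ι ℝ}
    (hA : ∀ μ ∈ spectrum ℂ (A.map Complex.ofReal), μ.re < 0) :
    ∃ (P : Matrix ι ι ℝ) (c : ℝ), 0 < c ∧ (P - 1).PosSemidef ∧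
      (-(Aᵀ * P + P * A) - c • 1).PosSemidef := by
  obtain ⟨h, hh, hρ⟩ :=
    spectrum.exists_spectralRadius_one_add_smul_lt_one (A.map Complex.ofReal).finite_spectrum hA
  have hmap : (1 + h • A).map Complex.ofReal = 1 + (h : ℂ) • A.map Complex.ofReal := by
    rw [Matrix.map_add _ Complex.ofReal_add,
      Matrix.map_one _ Complex.ofReal_zero Complex.ofReal_one,
      Matrix.map_smul' _ _ _ fun _ _ ↦ Complex.ofReal_mul _ _]
  have hB : Summable fun k ↦ ‖(1 + h • A) ^ k‖ := by
    convert spectrum.summable_norm_pow_of_spectralRadius_lt_one hρ using 2 with k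
    rw [← frobenius_norm_map_eq _ _ Complex.norm_real, ← hmap]
    exact congrArg norm ((1 + h • A).map_pow Complex.ofRealHom k)
  obtain ⟨P, hP, hPA⟩ := exists_lyapunov_of_summable_norm_pow_one_add_smul hh hB
  exact ⟨P, h⁻¹, inv_pos.mpr hh, hP, hPA⟩

end Frobenius

theorem exists_posDef_decay_of_lyapunov {κ : Type*} [Fintype κ] {A P : Matrix ι ι ℝ}
    (C : Matrix κ ι ℝ) {c : ℝ} (hc : 0 < c) (hP : (P - 1).PosSemidef)
    (hPA : (-(Aᵀ * P + P * A) - c • 1).PosSemidef) :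
    ∃ (M : Matrix ι ι ℝ) (lam : ℝ), M.PosDef ∧ 0 < lam ∧ (M - Cᵀ * C).PosSemidef ∧
      ((-(2 * lam)) • M - (Aᵀ * M + M * A)).PosSemidef := by
  have hCC : (Cᵀ * C).PosSemidef := by
    simpa [conjTranspose_eq_transpose_of_trivial] using posSemidef_conjTranspose_mul_self C
  have hPpos : P.PosDef := by simpa using PosDef.one.add_posSemidef hP
  obtain ⟨a, ha, hCa⟩ := hCC.isHermitian.exists_le_smul_one
  obtain ⟨b, hb, hPb⟩ := hPpos.isHermitian.exists_le_smul_one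
  set lam := c / (2 * (b + 1))
  have hc_eq : c = 2 * lam * (b + 1) := by simp only [lam]; field_simp
  have hlam : 0 < lam := by positivity
  refine ⟨(a + 1) • P, lam, hPpos.smul (by positivity), hlam, ?_, ?_⟩
  · convert ((hP.smul (by positivity : (0 : ℝ) ≤ a + 1)).add hCa).add PosSemidef.one using 1
    module
  · convert ((hPA.add (hPb.smul (by positivity : (0 : ℝ) ≤ 2 * lam))).add
      (PosSemidef.one.smul (by positivity : (0 : ℝ) ≤ 2 * lam))).smul
      (by positivity : (0 : ℝ) ≤ a + 1) using 1
    rw [mul_smul_comm, smul_mul_assoc, hc_eq]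
    module

end Matrix

/-- if `A₁ + B₁K` is Hurwitz then there exist a symmetric positive
definite `M` and `λ > 0` with `M ≥ C₁ᵀC₁` and
`(A₁+B₁K)ᵀM + M(A₁+B₁K) ≤ −2λM` in the Loewner order. -/
theorem stmt_2 {n p m : ℕ}
    (A₁ : Matrix (Fin n) (Fin n) ℝ) (B₁ : Matrix (Fin n) (Fin p) ℝ)
    (K : Matrix (Fin p) (Fin n) ℝ) (C₁ : Matrix (Fin m) (Fin n) ℝ)
    (hHurwitz : ∀ μ ∈ spectrum ℂ ((A₁ + B₁ * K).map (Complex.ofReal)), μ.re < 0) :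
    ∃ (M : Matrix (Fin n) (Fin n) ℝ) (lam : ℝ),
      M.IsSymm ∧ M.PosDef ∧ 0 < lam ∧
      (M - C₁ᵀ * C₁).PosSemidef ∧
      ((-(2 * lam)) • M - ((A₁ + B₁ * K)ᵀ * M + M * (A₁ + B₁ * K))).PosSemidef := by
  obtain ⟨P, c, hc, hP, hPA⟩ := exists_lyapunov_of_hurwitz hHurwitz
  obtain ⟨M, lam, hM, hlam, hMC, hdecay⟩ := exists_posDef_decay_of_lyapunov C₁ hc hP hPA
  have hsymm : M.IsSymm := by
    simpa [conjTranspose_eq_transpose_of_trivial] using hM.isHermitian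
  exact ⟨M, lam, hsymm, hM, hlam, hMC, hdecay⟩
end

section
/- Let Σᵢ (i=1,2) be linear systems ẋᵢ = Aᵢxᵢ + Bᵢuᵢ, yᵢ = Cᵢxᵢ. Suppose K stabilizes Σ₁ with certificate (M, λ) satisfying M ≥ C₁ᵀC₁ and (A₁+B₁K)ᵀM + M(A₁+B₁K) ≤ −2λM, and suppose P, Q satisfy PA₂ = A₁P + B₁Q and C₂ = C₁P. Then V(x₁,x₂) = √((x₁−Px₂)ᵀM(x₁−Px₂)) is a simulation function of Σ₂ by Σ₁ with interface u_V(u₂,x₁,x₂) = Ru₂ + Qx₂ + K(x₁ − Px₂) and γ(ν) = (‖√M(B₁R − PB₂)‖/λ)·ν, for any matrix R of appropriate dimensions. -/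
open Matrix

/-- Euclidean norm of a finite real vector. -/
noncomputable def eunorm {n : ℕ} (v : Fin n → ℝ) : ℝ := Real.sqrt (∑ i, (v i) ^ 2)

/-- Operator norm (w.r.t. Euclidean norms) of a real matrix. -/
noncomputable def opNorm {a b : ℕ} (X : Matrix (Fin a) (Fin b) ℝ) : ℝ :=
  ‖(Matrix.toEuclideanLin X).toContinuousLinearMap‖

lemma eunorm_eq_sqrt_dot {n : ℕ} (v : Fin n → ℝ) : eunorm v = Real.sqrt (v ⬝ᵥ v) := by
  simp [eunorm, dotProduct, sq]

lemma eunorm_eq_norm {n : ℕ} (v : Fin n → ℝ) :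
    eunorm v = ‖(WithLp.equiv 2 (Fin n → ℝ)).symm v‖ := by
  rw [EuclideanSpace.norm_eq]
  simp [eunorm, Real.norm_eq_abs, sq_abs]

lemma dot_cs {n : ℕ} (v w : Fin n → ℝ) : v ⬝ᵥ w ≤ eunorm v * eunorm w := by
  have := real_inner_le_norm ((WithLp.equiv 2 (Fin n → ℝ)).symm v)
      ((WithLp.equiv 2 (Fin n → ℝ)).symm w)
  rw [eunorm_eq_norm, eunorm_eq_norm]
  refine le_trans (le_of_eq ?_) this
  simp [PiLp.inner_apply, dotProduct, mul_comm]

lemma eunorm_mulVec_le {a b : ℕ} (X : Matrix (Fin a) (Fin b) ℝ) (v : Fin b → ℝ) :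
    eunorm (X.mulVec v) ≤ opNorm X * eunorm v := by
  have h := (Matrix.toEuclideanLin X).toContinuousLinearMap.le_opNorm
      ((WithLp.equiv 2 (Fin b → ℝ)).symm v)
  simpa [eunorm_eq_norm, opNorm, Matrix.toEuclideanLin_apply] using h

lemma dot_mulVec_left {a b : ℕ} (X : Matrix (Fin a) (Fin b) ℝ) (v : Fin a → ℝ) (w : Fin b → ℝ) :
    v ⬝ᵥ (X.mulVec w) = (Xᵀ.mulVec v) ⬝ᵥ w := by
  simp only [dotProduct, Matrix.mulVec, dotProduct, Finset.mul_sum, Finset.sum_mul,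
    Matrix.transpose_apply]
  rw [Finset.sum_comm]
  congr 1; ext i; congr 1; ext j; ring

lemma hasDerivAt_mulVec {a b : ℕ} (X : Matrix (Fin a) (Fin b) ℝ) {f : ℝ → Fin b → ℝ}
    {f' : Fin b → ℝ} {t : ℝ} (hf : HasDerivAt f f' t) :
    HasDerivAt (fun s => X.mulVec (f s)) (X.mulVec f') t := by
  rw [hasDerivAt_pi] at hf ⊢
  intro i
  simp only [Matrix.mulVec, dotProduct]
  exact HasDerivAt.fun_sum fun j _ => ((hf j).const_mul (X i j))

lemma hasDerivAt_dot {n : ℕ} {f g : ℝ → Fin n → ℝ} {f' g' : Fin n → ℝ} {t : ℝ}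
    (hf : HasDerivAt f f' t) (hg : HasDerivAt g g' t) :
    HasDerivAt (fun s => f s ⬝ᵥ g s) (f' ⬝ᵥ g t + f t ⬝ᵥ g') t := by
  simp only [dotProduct]
  rw [← Finset.sum_add_distrib]
  exact HasDerivAt.fun_sum fun i _ => ((hasDerivAt_pi.1 hf i).mul (hasDerivAt_pi.1 hg i))


/-- Girard–Pappas: for linear systems, given a stabilizing gain `K`
with Lyapunov certificate `(M, λ)` satisfying `M ≥ C₁ᵀC₁` and
`(A₁+B₁K)ᵀM + M(A₁+B₁K) ≤ −2λM`, and matrices `P, Q` with `PA₂ = A₁P + B₁Q`,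
`C₂ = C₁P`, the function `V(x₁,x₂) = √((x₁−Px₂)ᵀM(x₁−Px₂))` is a simulation
function of `Σ₂` by `Σ₁`, with interface `u_V = Ru₂ + Qx₂ + K(x₁−Px₂)` and
`γ(ν) = (‖√M(B₁R−PB₂)‖/λ)ν`, for any `R` of appropriate dimensions.  The
simulation-function property is expressed by (i) the output-error bound and
(ii) strict decrease of `V` along coupled trajectories whenever
`γ(‖u₂‖) < V`. -/
theorem stmt_5 {n₁ n₂ p₁ p₂ m : ℕ}
    (A₁ : Matrix (Fin n₁) (Fin n₁) ℝ) (B₁ : Matrix (Fin n₁) (Fin p₁) ℝ)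
    (C₁ : Matrix (Fin m) (Fin n₁) ℝ)
    (A₂ : Matrix (Fin n₂) (Fin n₂) ℝ) (B₂ : Matrix (Fin n₂) (Fin p₂) ℝ)
    (C₂ : Matrix (Fin m) (Fin n₂) ℝ)
    (K : Matrix (Fin p₁) (Fin n₁) ℝ)
    (P : Matrix (Fin n₁) (Fin n₂) ℝ) (Q : Matrix (Fin p₁) (Fin n₂) ℝ)
    (R : Matrix (Fin p₁) (Fin p₂) ℝ)
    (M : Matrix (Fin n₁) (Fin n₁) ℝ) (hMs : M.IsSymm) (hMpd : M.PosDef)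
    (sqrtM : Matrix (Fin n₁) (Fin n₁) ℝ) (hsq : sqrtM.PosSemidef)
    (hsq2 : sqrtM * sqrtM = M)
    (lam : ℝ) (hlam : 0 < lam)
    (hLoewner : (M - C₁ᵀ * C₁).PosSemidef)
    (hLyap : ((-(2 * lam)) • M -
        ((A₁ + B₁ * K)ᵀ * M + M * (A₁ + B₁ * K))).PosSemidef)
    (hPA : P * A₂ = A₁ * P + B₁ * Q) (hCP : C₂ = C₁ * P) :
    -- the simulation function, interface, and γ
    let V : (Fin n₁ → ℝ) → (Fin n₂ → ℝ) → ℝ := fun x₁ x₂ =>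
      Real.sqrt ((x₁ - P.mulVec x₂) ⬝ᵥ M.mulVec (x₁ - P.mulVec x₂))
    let uV : (Fin p₂ → ℝ) → (Fin n₁ → ℝ) → (Fin n₂ → ℝ) → (Fin p₁ → ℝ) :=
      fun u₂ x₁ x₂ => R.mulVec u₂ + Q.mulVec x₂ + K.mulVec (x₁ - P.mulVec x₂)
    let γ : ℝ → ℝ := fun ν => (opNorm (sqrtM * (B₁ * R - P * B₂)) / lam) * ν
    -- (i) output-error bound
    (∀ (x₁ : Fin n₁ → ℝ) (x₂ : Fin n₂ → ℝ),
      V x₁ x₂ ≥ eunorm (C₁.mulVec x₁ - C₂.mulVec x₂)) ∧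
    -- (ii) decrease condition along coupled trajectories
    (∀ (x₁ : ℝ → Fin n₁ → ℝ) (x₂ : ℝ → Fin n₂ → ℝ) (u₂ : ℝ → Fin p₂ → ℝ),
      (∀ t, HasDerivAt x₁
          (A₁.mulVec (x₁ t) + B₁.mulVec (uV (u₂ t) (x₁ t) (x₂ t))) t) →
      (∀ t, HasDerivAt x₂ (A₂.mulVec (x₂ t) + B₂.mulVec (u₂ t)) t) →
      ∀ t, γ (eunorm (u₂ t)) < V (x₁ t) (x₂ t) →
        deriv (fun s => V (x₁ s) (x₂ s)) t < 0) := by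
  intro V uV γ
  have hsqs : sqrtMᵀ = sqrtM := hsq.1
  have hMsymm : Mᵀ = M := hMs
  constructor
  · -- part (i)
    intro x₁ x₂
    set e := x₁ - P.mulVec x₂ with he
    have hCe : C₁.mulVec x₁ - C₂.mulVec x₂ = C₁.mulVec e := by
      rw [hCP, he, Matrix.mulVec_sub, Matrix.mulVec_mulVec]
    have hdot : (C₁.mulVec e) ⬝ᵥ (C₁.mulVec e) ≤ e ⬝ᵥ M.mulVec e := by
      have h0 := hLoewner.dotProduct_mulVec_nonneg e
      simp only [star_trivial, Matrix.sub_mulVec, dotProduct_sub] at h0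
      have h1 : (C₁.mulVec e) ⬝ᵥ (C₁.mulVec e) = e ⬝ᵥ ((C₁ᵀ * C₁).mulVec e) := by
        rw [← Matrix.mulVec_mulVec, dot_mulVec_left]
        exact dotProduct_comm _ _
      linarith
    rw [hCe, eunorm_eq_sqrt_dot]
    exact Real.sqrt_le_sqrt hdot
  · -- part (ii)
    intro x₁ x₂ u₂ hx₁ hx₂ t hγ
    set F := A₁ + B₁ * K with hF
    set D := B₁ * R - P * B₂ with hD
    set c := opNorm (sqrtM * D) with hc
    have hc0 : 0 ≤ c := norm_nonneg _
    set e : ℝ → Fin n₁ → ℝ := fun s => x₁ s - P.mulVec (x₂ s) with he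
    -- derivative of e
    have hde : HasDerivAt e (F.mulVec (e t) + D.mulVec (u₂ t)) t := by
      have h := (hx₁ t).sub (hasDerivAt_mulVec P (hx₂ t))
      refine h.congr_deriv ?_
      symm
      have h2 : P.mulVec (A₂.mulVec (x₂ t)) =
          A₁.mulVec (P.mulVec (x₂ t)) + B₁.mulVec (Q.mulVec (x₂ t)) := by
        rw [Matrix.mulVec_mulVec, hPA, Matrix.add_mulVec, Matrix.mulVec_mulVec,
          Matrix.mulVec_mulVec]
      show F.mulVec (e t) + D.mulVec (u₂ t) =
        A₁.mulVec (x₁ t) + B₁.mulVec (uV (u₂ t) (x₁ t) (x₂ t))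
          - P.mulVec (A₂.mulVec (x₂ t) + B₂.mulVec (u₂ t))
      simp only [uV, hF, hD, he, Matrix.mulVec_add, Matrix.mulVec_sub, Matrix.add_mulVec,
        Matrix.sub_mulVec, ← Matrix.mulVec_mulVec, h2]
      abel
    -- W and its derivative
    set W : ℝ → ℝ := fun s => e s ⬝ᵥ M.mulVec (e s) with hWdef
    set d := F.mulVec (e t) + D.mulVec (u₂ t) with hd
    have hW' : HasDerivAt W (d ⬝ᵥ M.mulVec (e t) + e t ⬝ᵥ M.mulVec d) t :=
      hasDerivAt_dot hde (hasDerivAt_mulVec M hde)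
    -- positivity of V t
    have hγ0 : 0 ≤ γ (eunorm (u₂ t)) := by
      have : (0:ℝ) ≤ c / lam * eunorm (u₂ t) :=
        mul_nonneg (div_nonneg hc0 hlam.le) (Real.sqrt_nonneg _)
      simpa [γ, eunorm] using this
    have hVpos : 0 < V (x₁ t) (x₂ t) := lt_of_le_of_lt hγ0 hγ
    have hVW : V (x₁ t) (x₂ t) = Real.sqrt (W t) := rfl
    have hWpos : 0 < W t := by
      by_contra h
      push_neg at h
      rw [hVW, Real.sqrt_eq_zero_of_nonpos h] at hVpos
      exact lt_irrefl 0 hVpos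
    set v := V (x₁ t) (x₂ t) with hv
    have hvpos : 0 < v := hVpos
    have hv2 : W t = v ^ 2 := by rw [hVW, Real.sq_sqrt hWpos.le]
    -- norm of sqrtM e equals v
    have hdotW : (sqrtM.mulVec (e t)) ⬝ᵥ (sqrtM.mulVec (e t)) = W t := by
      rw [dot_mulVec_left, hsqs, Matrix.mulVec_mulVec, hsq2]
      exact dotProduct_comm _ _
    have heM : eunorm (sqrtM.mulVec (e t)) = v := by
      rw [eunorm_eq_sqrt_dot, hdotW, ← hVW]
    -- symmetry rewriting: e ⬝ M d = d ⬝ M e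
    have hsymm : ∀ w₁ w₂ : Fin n₁ → ℝ, w₁ ⬝ᵥ M.mulVec w₂ = w₂ ⬝ᵥ M.mulVec w₁ := by
      intro w₁ w₂
      rw [dot_mulVec_left, hMsymm]
      exact dotProduct_comm _ _
    -- Lyapunov bound
    have hLy : (F.mulVec (e t)) ⬝ᵥ M.mulVec (e t) ≤ -lam * W t := by
      have h0 := hLyap.dotProduct_mulVec_nonneg (e t)
      simp only [star_trivial, Matrix.sub_mulVec, Matrix.add_mulVec,
        Matrix.smul_mulVec, dotProduct_sub, dotProduct_add,
        dotProduct_smul, smul_eq_mul] at h0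
      have h1 : e t ⬝ᵥ (Fᵀ * M).mulVec (e t) = (F.mulVec (e t)) ⬝ᵥ M.mulVec (e t) := by
        rw [← Matrix.mulVec_mulVec, dot_mulVec_left, Matrix.transpose_transpose]
      have h2 : e t ⬝ᵥ (M * F).mulVec (e t) = (F.mulVec (e t)) ⬝ᵥ M.mulVec (e t) := by
        rw [← Matrix.mulVec_mulVec, hsymm]
      rw [h1, h2] at h0
      have hWt : e t ⬝ᵥ M.mulVec (e t) = W t := rfl
      rw [hWt] at h0
      nlinarith [h0]
    -- cross-term bound
    have hcross : (D.mulVec (u₂ t)) ⬝ᵥ M.mulVec (e t) ≤ c * eunorm (u₂ t) * v := by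
      have h1 : (D.mulVec (u₂ t)) ⬝ᵥ M.mulVec (e t)
          = ((sqrtM * D).mulVec (u₂ t)) ⬝ᵥ (sqrtM.mulVec (e t)) := by
        rw [← hsq2, ← Matrix.mulVec_mulVec, dot_mulVec_left, hsqs, Matrix.mulVec_mulVec]
      rw [h1]
      calc ((sqrtM * D).mulVec (u₂ t)) ⬝ᵥ (sqrtM.mulVec (e t))
          ≤ eunorm ((sqrtM * D).mulVec (u₂ t)) * eunorm (sqrtM.mulVec (e t)) :=
            dot_cs _ _
        _ ≤ (c * eunorm (u₂ t)) * eunorm (sqrtM.mulVec (e t)) := by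
            apply mul_le_mul_of_nonneg_right (eunorm_mulVec_le _ _)
            rw [eunorm_eq_sqrt_dot]; exact Real.sqrt_nonneg _
        _ = c * eunorm (u₂ t) * v := by rw [heM]
    -- γ condition
    have hγ' : c * eunorm (u₂ t) < lam * v := by
      have : c / lam * eunorm (u₂ t) < v := hγ
      rw [div_mul_eq_mul_div, div_lt_iff₀ hlam] at this
      linarith [this]
    -- the derivative value is negative
    have hWval : d ⬝ᵥ M.mulVec (e t) + e t ⬝ᵥ M.mulVec d < 0 := by
      rw [hsymm (e t) d]
      rw [hd, add_dotProduct]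
      have hu2 : 0 ≤ eunorm (u₂ t) := Real.sqrt_nonneg _
      nlinarith [hLy, hcross, hv2, hvpos, hγ']
    -- conclude via chain rule
    have hcomp : HasDerivAt (fun s => Real.sqrt (W s))
        (1 / (2 * Real.sqrt (W t)) * (d ⬝ᵥ M.mulVec (e t) + e t ⬝ᵥ M.mulVec d)) t :=
      (Real.hasDerivAt_sqrt hWpos.ne').comp t hW'
    have hderiv : deriv (fun s => V (x₁ s) (x₂ s)) t
        = 1 / (2 * Real.sqrt (W t)) * (d ⬝ᵥ M.mulVec (e t) + e t ⬝ᵥ M.mulVec d) :=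
      hcomp.deriv
    rw [hderiv]
    apply mul_neg_of_pos_of_neg _ hWval
    positivity
end
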